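/- arXiv:2112.03853 — 3 statements merged into one kernel-verified Lean document; each statement's English description precedes it below -/
import Mathlib

section
/- For an odd prime p, a finite field k satisfies u^p = 1 for all nonzero u if and only if k ≅ F_2, or p is a Mersenne prime (p = 2^m − 1 for some m) and k ≅ F_{p+1}. -/
/-! The units of a finite field `k` form a cyclic group of order `|k| - 1`, so `u ^ p = 1` for all
units exactly when `|k| - 1 ∣ p`, i.e. `|k| = 2` or `|k| = p + 1`. In the latter case `|k|` is
even, so `k` has characteristic `2` and `|k|` is a power of `2`, making `p` a Mersenne prime. -/

namespace FiniteField

variable {k : Type*} [Field k] [Fintype k]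

theorem forall_units_pow_eq_one_iff_card_sub_one_dvd {n : ℕ} :
    (∀ u : kˣ, u ^ n = 1) ↔ Fintype.card k - 1 ∣ n := by
  rw [← Monoid.exponent_dvd_iff_forall_pow_eq_one, IsCyclic.exponent_eq_card, Nat.card_units,
    Nat.card_eq_fintype_card]

theorem exists_card_eq_two_pow_of_even_card (h : Even (Fintype.card k)) :
    ∃ n : ℕ, Fintype.card k = 2 ^ n := by
  have : CharP k 2 := ringChar.of_eq (even_card_iff_char_two.mpr (Nat.even_iff.mp h))
  obtain ⟨n, -, hn⟩ := FiniteField.card k 2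
  exact ⟨n, hn⟩

end FiniteField

/-- For an odd prime `p`, a finite field `k` satisfies `u^p = 1` for all units iff
`k ≅ F₂`, or `p` is a Mersenne prime and `k ≅ F_{p+1}`. -/
theorem finite_field_delta_p_iff (p : ℕ) (hp : p.Prime) (hodd : Odd p)
    (k : Type) [Field k] [Fintype k] :
    (∀ u : kˣ, u ^ p = 1) ↔
      Fintype.card k = 2 ∨ ((∃ m : ℕ, p = 2 ^ m - 1) ∧ Fintype.card k = p + 1) := by
  have hk : 2 ≤ Fintype.card k := Fintype.one_lt_card
  rw [FiniteField.forall_units_pow_eq_one_iff_card_sub_one_dvd, Nat.dvd_prime hp]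
  refine or_congr (by omega) ⟨fun hcard => ⟨?_, by omega⟩, fun h => by omega⟩
  have heven : Even (Fintype.card k) := by
    rw [show Fintype.card k = p + 1 by omega]
    exact hodd.add_one
  obtain ⟨m, hm⟩ := FiniteField.exists_card_eq_two_pow_of_even_card heven
  exact ⟨m, by omega⟩
end

section
/- The only prime ideal of R = Z/4[x_1,…,x_l]/(x_1^2−1,…,x_l^2−1) is the image of the ideal (2, x_1−1,…,x_l−1); in particular, R is a local ring with residue field F_2. -/
/-!
Write `R = ℤ/4[x_i] / (x_i² - 1)` and `P` for the image of `(2, x_i - 1)`. Reducing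
coefficients mod 2 and evaluating at `x = 1` identifies `R ⧸ P` with `𝔽₂`, so `P` is maximal.
Every generator of `P` is nilpotent: `2² = 4 = 0`, and `(x_i - 1)² = -2 (x_i - 1)` gives
`(x_i - 1)⁴ = 4 (x_i - 1)² = 0`. So `P` lies in the nilradical, hence in every prime ideal.
-/

open MvPolynomial

namespace MvPolynomial

variable {R S σ : Type*} [CommRing R] [CommRing S]

theorem sub_C_eval_mem_span_X_sub_C (x : σ → R) (p : MvPolynomial σ R) :
    p - C (eval x p) ∈ Ideal.span (Set.range fun i => X i - C (x i)) := by
  induction p using MvPolynomial.induction_on with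
  | C a => simp
  | add p q hp hq => simpa [sub_add_sub_comm] using Ideal.add_mem _ hp hq
  | mul_X p i hp =>
    have hXi : X i - C (x i) ∈ Ideal.span (Set.range fun i => X i - C (x i)) :=
      Ideal.subset_span ⟨i, rfl⟩
    convert Ideal.add_mem _ (Ideal.mul_mem_right (X i) _ hp)
      (Ideal.mul_mem_left _ (C (eval x p)) hXi) using 1
    simp only [eval_X, map_mul]
    ring

theorem ker_eval₂Hom_comp (f : R →+* S) (x : σ → R) :
    RingHom.ker (eval₂Hom f (f ∘ x)) =
      (RingHom.ker f).map C ⊔ Ideal.span (Set.range fun i => X i - C (x i)) := by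
  have heval (p : MvPolynomial σ R) : eval₂Hom f (f ∘ x) p = f (eval x p) :=
    (eval₂_comp_left f (RingHom.id R) x p).symm
  apply le_antisymm
  · intro p hp
    have hC : C (eval x p) ∈ (RingHom.ker f).map (C : R →+* MvPolynomial σ R) :=
      Ideal.mem_map_of_mem _ (by rwa [RingHom.mem_ker, ← heval])
    simpa using Ideal.add_mem _ (Ideal.mem_sup_right (sub_C_eval_mem_span_X_sub_C x p))
      (Ideal.mem_sup_left hC)
  · refine sup_le ?_ ?_
    · rw [Ideal.map_le_iff_le_comap]
      intro a ha
      simpa [RingHom.mem_ker, Ideal.mem_comap] using ha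
    · rw [Ideal.span_le]
      rintro _ ⟨i, rfl⟩
      simp [RingHom.mem_ker]

end MvPolynomial

theorem ZMod.ker_castHom_four_two :
    RingHom.ker (ZMod.castHom (by norm_num : 2 ∣ 4) (ZMod 2)) = Ideal.span {2} := by
  ext c
  rw [RingHom.mem_ker, Ideal.mem_span_singleton']
  revert c
  decide

theorem isNilpotent_sub_one_of_sq_eq_one {A : Type*} [CommRing A] (h4 : (4 : A) = 0) {x : A}
    (hx : x ^ 2 = 1) : IsNilpotent (x - 1) := by
  have hsq : (x - 1) ^ 2 = -2 * (x - 1) := by linear_combination hx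
  refine ⟨4, ?_⟩
  calc (x - 1) ^ 4 = ((x - 1) ^ 2) ^ 2 := by ring
    _ = (-2 * (x - 1)) ^ 2 := by rw [hsq]
    _ = 4 * (x - 1) ^ 2 := by ring
    _ = 0 := by rw [h4, zero_mul]

theorem Ideal.IsPrime.eq_of_isMaximal_of_le_nilradical {A : Type*} [CommRing A]
    {M Q : Ideal A} [hM : M.IsMaximal] (hMnil : M ≤ nilradical A) (hQ : Q.IsPrime) : Q = M :=
  (hM.eq_of_le hQ.ne_top (hMnil.trans (nilradical_le_prime Q))).symm

theorem IsLocalRing.of_isMaximal_of_le_nilradical {A : Type*} [CommRing A] (M : Ideal A)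
    [hM : M.IsMaximal] (hMnil : M ≤ nilradical A) : IsLocalRing A :=
  of_unique_max_ideal ⟨M, hM, fun _ hJ => hJ.isPrime.eq_of_isMaximal_of_le_nilradical hMnil⟩

namespace MvPolynomial

variable (σ : Type*)

noncomputable def sqSubOneIdeal : Ideal (MvPolynomial σ (ZMod 4)) :=
  Ideal.span (Set.range fun i => X i ^ 2 - 1)

noncomputable def twoXSubOneIdeal : Ideal (MvPolynomial σ (ZMod 4)) :=
  Ideal.span ({2} ∪ Set.range fun i => X i - 1)

theorem ker_eval₂Hom_castHom_one :
    RingHom.ker (eval₂Hom (ZMod.castHom (by norm_num : 2 ∣ 4) (ZMod 2)) (1 : σ → ZMod 2)) =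
      twoXSubOneIdeal σ := by
  have h := ker_eval₂Hom_comp (ZMod.castHom (by norm_num : 2 ∣ 4) (ZMod 2)) (1 : σ → ZMod 4)
  rw [ZMod.ker_castHom_four_two, Ideal.map_span, Set.image_singleton, map_ofNat,
    ← Ideal.span_union] at h
  simpa [twoXSubOneIdeal] using h

noncomputable def quotientTwoXSubOneIdealEquiv :
    MvPolynomial σ (ZMod 4) ⧸ twoXSubOneIdeal σ ≃+* ZMod 2 :=
  (Ideal.quotEquivOfEq (ker_eval₂Hom_castHom_one σ).symm).trans
    (RingHom.quotientKerEquivOfSurjective (ZMod.ringHom_surjective _))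

theorem sqSubOneIdeal_le_twoXSubOneIdeal : sqSubOneIdeal σ ≤ twoXSubOneIdeal σ := by
  rw [sqSubOneIdeal, Ideal.span_le]
  rintro _ ⟨i, rfl⟩
  have hXi : X i - 1 ∈ twoXSubOneIdeal σ := Ideal.subset_span (Or.inr ⟨i, rfl⟩)
  have hfactor : (X i : MvPolynomial σ (ZMod 4)) ^ 2 - 1 = (X i + 1) * (X i - 1) := by ring
  simpa only [SetLike.mem_coe, hfactor] using Ideal.mul_mem_left _ (X i + 1) hXi

theorem map_twoXSubOneIdeal_le_nilradical :
    (twoXSubOneIdeal σ).map (Ideal.Quotient.mk (sqSubOneIdeal σ)) ≤ nilradical _ := by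
  set π := Ideal.Quotient.mk (sqSubOneIdeal σ)
  have h4 : (4 : MvPolynomial σ (ZMod 4) ⧸ sqSubOneIdeal σ) = 0 :=
    (map_ofNat π 4).symm.trans ((congrArg π (CharP.ofNat_eq_zero _ 4)).trans (map_zero π))
  rw [twoXSubOneIdeal, Ideal.map_span, Ideal.span_le]
  rintro _ ⟨_, rfl | ⟨i, rfl⟩, rfl⟩
  · rw [SetLike.mem_coe, mem_nilradical, map_ofNat]
    exact ⟨2, by linear_combination h4⟩
  · have hsq : π (X i) ^ 2 = 1 := by
      rw [← map_pow, ← sub_eq_zero, ← map_one π, ← map_sub, Ideal.Quotient.eq_zero_iff_mem]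
      exact Ideal.subset_span ⟨i, rfl⟩
    simpa [mem_nilradical] using isNilpotent_sub_one_of_sq_eq_one h4 hsq

end MvPolynomial

/-- The only prime ideal of `Z/4[x₁,…,x_l]/(x₁²−1,…,x_l²−1)` is the image of
`(2, x₁−1,…,x_l−1)`; in particular the quotient is local with residue field `F₂`. -/
theorem unique_prime_ideal_zmod4_quotient (l : ℕ) :
    let I : Ideal (MvPolynomial (Fin l) (ZMod 4)) :=
      Ideal.span (Set.range fun i : Fin l => (X i : MvPolynomial (Fin l) (ZMod 4)) ^ 2 - 1)
    let P : Ideal (MvPolynomial (Fin l) (ZMod 4)) :=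
      Ideal.span ({(2 : MvPolynomial (Fin l) (ZMod 4))} ∪
        Set.range fun i : Fin l => (X i : MvPolynomial (Fin l) (ZMod 4)) - 1)
    (∀ Q : Ideal (MvPolynomial (Fin l) (ZMod 4) ⧸ I), Q.IsPrime →
        Q = P.map (Ideal.Quotient.mk I)) ∧
      IsLocalRing (MvPolynomial (Fin l) (ZMod 4) ⧸ I) ∧
      Nonempty ((MvPolynomial (Fin l) (ZMod 4) ⧸ I) ⧸ P.map (Ideal.Quotient.mk I) ≃+* ZMod 2) := by
  intro I P
  let e := (DoubleQuot.quotQuotEquivQuotOfLE (sqSubOneIdeal_le_twoXSubOneIdeal (Fin l))).trans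
    (quotientTwoXSubOneIdealEquiv (Fin l))
  have : (P.map (Ideal.Quotient.mk I)).IsMaximal :=
    Ideal.Quotient.maximal_of_isField _ (e.toMulEquiv.isField (Field.toIsField (ZMod 2)))
  have hnil : P.map (Ideal.Quotient.mk I) ≤ nilradical _ :=
    map_twoXSubOneIdeal_le_nilradical (Fin l)
  exact ⟨fun _ hQ => hQ.eq_of_isMaximal_of_le_nilradical hnil,
    IsLocalRing.of_isMaximal_of_le_nilradical _ hnil, ⟨e⟩⟩
end

section
/- In Z/4[x], the ideal (x^2 − 1) equals the ideal generated by {η(η+2) : η ∈ (2, x−1)}. -/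
open Polynomial

/-- In `Z/4[x]`, the ideal `(x² − 1)` equals the ideal generated by
`{η(η+2) : η ∈ (2, x−1)}`. -/
theorem span_sq_sub_one_eq_span_eta :
    Ideal.span {(X : Polynomial (ZMod 4)) ^ 2 - 1} =
      Ideal.span {f : Polynomial (ZMod 4) |
        ∃ η ∈ Ideal.span ({2, (X : Polynomial (ZMod 4)) - 1} : Set (Polynomial (ZMod 4))),
          f = η * (η + 2)} := by
  apply le_antisymm
  · rw [Ideal.span_le]
    rintro f hf
    rw [Set.mem_singleton_iff] at hf
    subst hf
    apply Ideal.subset_span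
    refine ⟨X - 1, Ideal.subset_span (by simp), by ring⟩
  · rw [Ideal.span_le]
    rintro f ⟨η, hη, rfl⟩
    rw [Ideal.mem_span_pair] at hη
    obtain ⟨a, b, rfl⟩ := hη
    rw [SetLike.mem_coe, Ideal.mem_span_singleton]
    -- key: X - 1 divides b - b^2 - C ((b - b^2).eval 1)
    set c₀ : ZMod 4 := (b - b^2).eval 1 with hc₀
    have hdvd : (X - C (1 : ZMod 4)) ∣ (b - b^2 - C c₀) := by
      rw [dvd_iff_isRoot, IsRoot.def]
      simp [hc₀]
    obtain ⟨d, hd⟩ := hdvd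
    have hc : (2 : Polynomial (ZMod 4)) * C c₀ = 0 := by
      have : (2 : ZMod 4) * c₀ = 0 := by
        have : ∀ s : ZMod 4, (2 : ZMod 4) * (s - s^2) = 0 := by decide
        simpa [hc₀, eval_sub, eval_pow] using this (b.eval 1)
      rw [← map_ofNat (C : ZMod 4 →+* _) 2, ← C_mul, this, C_0]
    have h4 : (4 : Polynomial (ZMod 4)) = 0 := by
      rw [← map_ofNat (C : ZMod 4 →+* _) 4, show (4 : ZMod 4) = 0 by decide, C_0]
    refine ⟨b^2 + 2*d, ?_⟩
    have hC1 : (C (1 : ZMod 4)) = 1 := C_1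
    rw [hC1] at hd
    linear_combination 2*(X - 1)*hd + (X - 1)*hc + (a^2 + a*(X-1)*b + a + d - X*d)*h4
end
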